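/- Let (U,Θ,ρ) be a probability space, N ∈ ℕ, Σ a symmetric positive definite N×N real matrix, and δ ∈ ℝ^N. Let M, C₁, C₂ > 0 be constants and let G_ε : U → ℝ^N (ε ∈ (0,1]), G^L : U → ℝ^N (L ∈ ℕ) and G_0 : U → ℝ^N be measurable maps, all bounded in absolute value by M on U, such that for all z ∈ U, |G_ε(z) − G_0(z)| ≤ C₁ ε^{1/2} and |G^L(z) − G_0(z)| ≤ C₂ L^{1/2} 2^{−L}. Define Gibbs measures μ_ε and ν_L with densities proportional to exp(−Φ_ε) and exp(−Φ^L) with respect to ρ, where Φ_ε(z) = (1/2)⟨Σ^{-1}(δ − G_ε(z)), δ − G_ε(z)⟩ and Φ^L(z) = (1/2)⟨Σ^{-1}(δ − G^L(z)), δ − G^L(z)⟩. Then there is a constant c, depending only on M, C₁, C₂, |δ| and Σ, such that for all ε ∈ (0,1] and all L ∈ ℕ, d_Hell(μ_ε, ν_L) ≤ c (ε^{1/2} + L^{1/2} 2^{−L}). -/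

import Mathlib

/-!
The potentials take values in `[0, K]`, with `K` depending only on `|δ|`, `M` and `Σ`, and are
Lipschitz in the forward map, so `|Φ_ε - Φ^L| ≤ c |G_ε - G^L| ≤ c (ε^{1/2} + L^{1/2} 2^{-L})`
after passing through `G_0`. For two potentials with values in `[0, K]` that differ by at most
`η`, the weights `exp (-Φ)` lie in `[e^{-K}, 1]` and differ by at most `η`, hence so do their
normalising constants. The normalised densities are then bounded below by `e^{-K}` and differ by
`O(η)`, and since `√` is Lipschitz away from `0`, their Hellinger distance is `O(η)`.
-/

open MeasureTheory Real Filter Matrix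

/-- Euclidean norm on `ℝ^N`. -/
noncomputable def euclNorm {N : ℕ} (v : Fin N → ℝ) : ℝ := Real.sqrt (v ⬝ᵥ v)

/-- Least-squares potential `Φ(z) = ½ ⟨Σ⁻¹(δ - G z), δ - G z⟩`. -/
noncomputable def potential {U : Type*} {N : ℕ} (S : Matrix (Fin N) (Fin N) ℝ)
    (δ : Fin N → ℝ) (G : U → Fin N → ℝ) (z : U) : ℝ :=
  1 / 2 * ((S⁻¹).mulVec (δ - G z) ⬝ᵥ (δ - G z))

/-- Hellinger distance between two measures, absolutely continuous with respect
to `ρ`, given by their densities `f, g`. -/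
noncomputable def hellingerDist {U : Type*} [MeasurableSpace U] (ρ : Measure U)
    (f g : U → ℝ) : ℝ :=
  Real.sqrt (1 / 2 * ∫ z, (Real.sqrt (f z) - Real.sqrt (g z)) ^ 2 ∂ρ)

/-- Gibbs density `exp(-Φ)/Z` with `Z = ∫ exp(-Φ) dρ`. -/
noncomputable def gibbsDensity {U : Type*} [MeasurableSpace U] (ρ : Measure U)
    (Φ : U → ℝ) (z : U) : ℝ :=
  Real.exp (-Φ z) / ∫ w, Real.exp (-Φ w) ∂ρ

section EuclNorm

variable {N : ℕ}

theorem euclNorm_eq_norm (v : Fin N → ℝ) : euclNorm v = ‖WithLp.toLp 2 v‖ := by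
  rw [EuclideanSpace.norm_eq, euclNorm, dotProduct]
  congr 1
  refine Finset.sum_congr rfl fun i _ => ?_
  rw [PiLp.toLp_apply, Real.norm_eq_abs, sq_abs, sq]

theorem euclNorm_nonneg (v : Fin N → ℝ) : 0 ≤ euclNorm v := Real.sqrt_nonneg _

theorem euclNorm_sub_le (a b : Fin N → ℝ) : euclNorm (a - b) ≤ euclNorm a + euclNorm b := by
  simpa only [euclNorm_eq_norm, WithLp.toLp_sub] using norm_sub_le _ _

theorem euclNorm_sub_comm (a b : Fin N → ℝ) : euclNorm (a - b) = euclNorm (b - a) := by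
  simpa only [euclNorm_eq_norm, WithLp.toLp_sub] using norm_sub_rev _ _

theorem euclNorm_sub_le_sub_add_sub (a b c : Fin N → ℝ) :
    euclNorm (a - b) ≤ euclNorm (a - c) + euclNorm (b - c) := by
  simpa only [euclNorm_eq_norm, WithLp.toLp_sub, dist_eq_norm] using
    dist_triangle_right (WithLp.toLp 2 a) (WithLp.toLp 2 b) (WithLp.toLp 2 c)

theorem abs_apply_le_euclNorm (v : Fin N → ℝ) (i : Fin N) : |v i| ≤ euclNorm v := by
  simpa only [euclNorm_eq_norm, Real.norm_eq_abs] using PiLp.norm_apply_le (WithLp.toLp 2 v) i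

theorem abs_mulVec_dotProduct_le (A : Matrix (Fin N) (Fin N) ℝ) (v w : Fin N → ℝ) :
    |A *ᵥ v ⬝ᵥ w| ≤ (∑ i, ∑ j, |A i j|) * euclNorm v * euclNorm w := by
  calc |A *ᵥ v ⬝ᵥ w| = |∑ i, ∑ j, A i j * v j * w i| := by
        simp only [dotProduct, mulVec, Finset.sum_mul]
    _ ≤ ∑ i, ∑ j, |A i j * v j * w i| :=
        (Finset.abs_sum_le_sum_abs _ _).trans
          (Finset.sum_le_sum fun i _ => Finset.abs_sum_le_sum_abs _ _)
    _ ≤ ∑ i, ∑ j, |A i j| * euclNorm v * euclNorm w := by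
        gcongr with i _ j _
        rw [abs_mul, abs_mul]
        have := euclNorm_nonneg v
        gcongr
        exacts [abs_apply_le_euclNorm v j, abs_apply_le_euclNorm w i]
    _ = (∑ i, ∑ j, |A i j|) * euclNorm v * euclNorm w := by
        simp only [Finset.sum_mul]

theorem abs_mulVec_dotProduct_self_sub_le (A : Matrix (Fin N) (Fin N) ℝ) (v w : Fin N → ℝ) :
    |A *ᵥ v ⬝ᵥ v - A *ᵥ w ⬝ᵥ w|
      ≤ (∑ i, ∑ j, |A i j|) * (euclNorm v + euclNorm w) * euclNorm (v - w) := by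
  have hsplit : A *ᵥ v ⬝ᵥ v - A *ᵥ w ⬝ᵥ w = A *ᵥ (v - w) ⬝ᵥ v + A *ᵥ w ⬝ᵥ (v - w) := by
    rw [mulVec_sub, sub_dotProduct, dotProduct_sub]
    ring
  rw [hsplit]
  calc _ ≤ |A *ᵥ (v - w) ⬝ᵥ v| + |A *ᵥ w ⬝ᵥ (v - w)| := abs_add_le _ _
    _ ≤ (∑ i, ∑ j, |A i j|) * euclNorm (v - w) * euclNorm v
          + (∑ i, ∑ j, |A i j|) * euclNorm w * euclNorm (v - w) :=
        add_le_add (abs_mulVec_dotProduct_le _ _ _) (abs_mulVec_dotProduct_le _ _ _)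
    _ = _ := by ring

end EuclNorm

section Potential

variable {U : Type*} {N : ℕ} (S : Matrix (Fin N) (Fin N) ℝ) (δ : Fin N → ℝ)

theorem potential_nonneg (hS : S.PosDef) (G : U → Fin N → ℝ) (z : U) :
    0 ≤ potential S δ G z := by
  have h := hS.inv.posSemidef.dotProduct_mulVec_nonneg (δ - G z)
  rw [star_trivial, dotProduct_comm] at h
  exact mul_nonneg (by norm_num) h

theorem potential_le {G : U → Fin N → ℝ} {z : U} {M : ℝ} (hG : euclNorm (G z) ≤ M) :
    potential S δ G z ≤ (∑ i, ∑ j, |S⁻¹ i j|) * (euclNorm δ + M) ^ 2 / 2 := by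
  have hv : euclNorm (δ - G z) ≤ euclNorm δ + M := (euclNorm_sub_le _ _).trans (by linarith)
  calc potential S δ G z
      ≤ 1 / 2 * ((∑ i, ∑ j, |S⁻¹ i j|) * euclNorm (δ - G z) * euclNorm (δ - G z)) := by
        unfold potential
        gcongr
        exact (le_abs_self _).trans (abs_mulVec_dotProduct_le _ _ _)
    _ ≤ 1 / 2 * ((∑ i, ∑ j, |S⁻¹ i j|) * (euclNorm δ + M) * (euclNorm δ + M)) := by
        have hv₀ := euclNorm_nonneg (δ - G z)
        have : 0 ≤ euclNorm δ + M := hv₀.trans hv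
        gcongr
    _ = _ := by ring

theorem abs_potential_sub_le {G₁ G₂ : U → Fin N → ℝ} {z : U} {M : ℝ}
    (h₁ : euclNorm (G₁ z) ≤ M) (h₂ : euclNorm (G₂ z) ≤ M) :
    |potential S δ G₁ z - potential S δ G₂ z|
      ≤ (∑ i, ∑ j, |S⁻¹ i j|) * (euclNorm δ + M) * euclNorm (G₁ z - G₂ z) := by
  have hv₁ : euclNorm (δ - G₁ z) ≤ euclNorm δ + M := (euclNorm_sub_le _ _).trans (by linarith)
  have hv₂ : euclNorm (δ - G₂ z) ≤ euclNorm δ + M := (euclNorm_sub_le _ _).trans (by linarith)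
  have hd : euclNorm ((δ - G₁ z) - (δ - G₂ z)) = euclNorm (G₁ z - G₂ z) := by
    rw [sub_sub_sub_cancel_left, euclNorm_sub_comm]
  calc |potential S δ G₁ z - potential S δ G₂ z|
      = 1 / 2 * |S⁻¹ *ᵥ (δ - G₁ z) ⬝ᵥ (δ - G₁ z) - S⁻¹ *ᵥ (δ - G₂ z) ⬝ᵥ (δ - G₂ z)| := by
        rw [potential, potential, ← mul_sub, abs_mul, abs_of_pos (by norm_num : (0 : ℝ) < 1 / 2)]
    _ ≤ 1 / 2 * ((∑ i, ∑ j, |S⁻¹ i j|) * (euclNorm (δ - G₁ z) + euclNorm (δ - G₂ z))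
          * euclNorm (G₁ z - G₂ z)) := by
        rw [← hd]
        gcongr
        exact abs_mulVec_dotProduct_self_sub_le _ _ _
    _ ≤ 1 / 2 * ((∑ i, ∑ j, |S⁻¹ i j|) * (2 * (euclNorm δ + M)) * euclNorm (G₁ z - G₂ z)) := by
        have := euclNorm_nonneg (G₁ z - G₂ z)
        gcongr
        linarith
    _ = _ := by ring

theorem measurable_potential [MeasurableSpace U] {G : U → Fin N → ℝ} (hG : Measurable G) :
    Measurable (potential S δ G) := by
  have hq : Continuous fun v : Fin N → ℝ => 1 / 2 * (S⁻¹ *ᵥ (δ - v) ⬝ᵥ (δ - v)) := by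
    simp only [mulVec, dotProduct, Pi.sub_apply]
    fun_prop
  exact hq.measurable.comp hG

end Potential

theorem abs_exp_neg_sub_exp_neg_le {a b : ℝ} (ha : 0 ≤ a) (hb : 0 ≤ b) :
    |exp (-a) - exp (-b)| ≤ |a - b| := by
  wlog hab : b ≤ a generalizing a b
  · rw [abs_sub_comm, abs_sub_comm a]
    exact this hb ha (le_of_not_ge hab)
  have hfactor : exp (-a) = exp (-b) * exp (-(a - b)) := by rw [← exp_add]; ring_nf
  have hb₁ : exp (-b) ≤ 1 := exp_le_one_iff.2 (by linarith)
  have hd₁ : exp (-(a - b)) ≤ 1 := exp_le_one_iff.2 (by linarith)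
  -- `e^{-b} - e^{-a} = e^{-b} (1 - e^{-(a-b)}) ≤ 1 - e^{-(a-b)} ≤ a - b`
  have hd₀ := add_one_le_exp (-(a - b))
  rw [abs_of_nonpos (by rw [hfactor]; nlinarith [exp_pos (-b)]), abs_of_nonneg (by linarith),
    hfactor]
  nlinarith [mul_nonneg (sub_nonneg.2 hb₁) (sub_nonneg.2 hd₁)]

theorem exp_neg_mem_Icc {x K : ℝ} (hx : x ∈ Set.Icc 0 K) : exp (-x) ∈ Set.Icc (exp (-K)) 1 :=
  ⟨exp_le_exp.2 (neg_le_neg hx.2), exp_le_one_iff.2 (neg_nonpos.2 hx.1)⟩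

theorem abs_sqrt_sub_sqrt_le {a b m : ℝ} (hm : 0 < m) (ha : m ≤ a) (hb : m ≤ b) :
    |√a - √b| ≤ |a - b| / (2 * √m) := by
  have hsum : 2 * √m ≤ √a + √b := by
    linarith [Real.sqrt_le_sqrt ha, Real.sqrt_le_sqrt hb]
  have hprod : a - b = (√a - √b) * (√a + √b) := by
    rw [mul_comm, ← sq_sub_sq, sq_sqrt (hm.le.trans ha), sq_sqrt (hm.le.trans hb)]
  rw [le_div_iff₀ (by positivity), hprod, abs_mul, abs_of_nonneg (hsum.trans' (by positivity))]
  gcongr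

theorem abs_div_sub_div_le {x₁ x₂ y₁ y₂ m : ℝ} (hm : 0 < m) (hy₁ : m ≤ y₁) (hy₂ : m ≤ y₂)
    (hx₂ : |x₂| ≤ 1) (hy₂' : y₂ ≤ 1) :
    |x₁ / y₁ - x₂ / y₂| ≤ (|x₁ - x₂| + |y₁ - y₂|) / m ^ 2 := by
  have hy₁₀ : 0 < y₁ := hm.trans_le hy₁
  have hy₂₀ : 0 < y₂ := hm.trans_le hy₂
  have hsplit : x₁ / y₁ - x₂ / y₂ = ((x₁ - x₂) * y₂ + x₂ * (y₂ - y₁)) / (y₁ * y₂) := by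
    field_simp
    ring
  have hnum : |(x₁ - x₂) * y₂ + x₂ * (y₂ - y₁)| ≤ |x₁ - x₂| + |y₁ - y₂| := by
    calc _ ≤ |x₁ - x₂| * |y₂| + |x₂| * |y₂ - y₁| := by
          rw [← abs_mul, ← abs_mul]; exact abs_add_le _ _
      _ ≤ |x₁ - x₂| * 1 + 1 * |y₁ - y₂| := by
          rw [abs_of_pos hy₂₀, abs_sub_comm y₂]; gcongr
      _ = _ := by ring
  rw [hsplit, abs_div, abs_of_pos (mul_pos hy₁₀ hy₂₀), sq]
  exact div_le_div₀ (by positivity) hnum (by positivity) (mul_le_mul hy₁ hy₂ hm.le hy₁₀.le)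

section Integrals

variable {U : Type*} [MeasurableSpace U] (ρ : Measure U) [IsProbabilityMeasure ρ]

theorem abs_integral_sub_integral_le {f g : U → ℝ} {η : ℝ} (hf : Integrable f ρ)
    (hg : Integrable g ρ) (h : ∀ z, |f z - g z| ≤ η) :
    |∫ z, f z ∂ρ - ∫ z, g z ∂ρ| ≤ η := by
  rw [← integral_sub hf hg, ← Real.norm_eq_abs]
  simpa using norm_integral_le_of_norm_le_const (μ := ρ) (f := fun z => f z - g z)
    (Eventually.of_forall h)

theorem hellingerDist_le_of_abs_sqrt_sub_le {f g : U → ℝ} {B : ℝ} (hB : 0 ≤ B)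
    (h : ∀ z, |√(f z) - √(g z)| ≤ B) : hellingerDist ρ f g ≤ B := by
  have hsq : ∀ z, ‖(√(f z) - √(g z)) ^ 2‖ ≤ B ^ 2 := fun z => by
    rw [norm_pow, Real.norm_eq_abs]
    exact pow_le_pow_left₀ (abs_nonneg _) (h z) 2
  have hint := (le_abs_self _).trans
    (by simpa using norm_integral_le_of_norm_le_const (μ := ρ) (Eventually.of_forall hsq))
  have hint₀ : 0 ≤ ∫ z, (√(f z) - √(g z)) ^ 2 ∂ρ := integral_nonneg fun z => sq_nonneg _
  calc hellingerDist ρ f g ≤ √(B ^ 2) := Real.sqrt_le_sqrt (by linarith)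
    _ = B := Real.sqrt_sq hB

theorem integrable_exp_neg {Φ : U → ℝ} (hΦ : Measurable Φ) (h : ∀ z, 0 ≤ Φ z) :
    Integrable (fun z => exp (-Φ z)) ρ :=
  .of_bound hΦ.neg.exp.aestronglyMeasurable 1 (Eventually.of_forall fun z => by
    rw [Real.norm_eq_abs, abs_of_pos (exp_pos _)]
    exact exp_le_one_iff.2 (neg_nonpos.2 (h z)))

theorem integral_exp_neg_mem_Icc {Φ : U → ℝ} {K : ℝ} (hΦ : Measurable Φ)
    (h : ∀ z, Φ z ∈ Set.Icc 0 K) : ∫ z, exp (-Φ z) ∂ρ ∈ Set.Icc (exp (-K)) 1 := by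
  have hint := integrable_exp_neg ρ hΦ fun z => (h z).1
  constructor
  · simpa using integral_mono (integrable_const _) hint fun z => (exp_neg_mem_Icc (h z)).1
  · simpa using integral_mono hint (integrable_const _) fun z => (exp_neg_mem_Icc (h z)).2

theorem hellingerDist_gibbsDensity_le {Φ₁ Φ₂ : U → ℝ} {K η : ℝ}
    (hΦ₁ : Measurable Φ₁) (hΦ₂ : Measurable Φ₂)
    (h₁ : ∀ z, Φ₁ z ∈ Set.Icc 0 K) (h₂ : ∀ z, Φ₂ z ∈ Set.Icc 0 K)
    (hη : ∀ z, |Φ₁ z - Φ₂ z| ≤ η) :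
    hellingerDist ρ (gibbsDensity ρ Φ₁) (gibbsDensity ρ Φ₂) ≤ exp (3 * K) * η := by
  obtain ⟨z₀⟩ := nonempty_of_isProbabilityMeasure ρ
  have hK : 0 ≤ K := (h₁ z₀).1.trans (h₁ z₀).2
  have hη₀ : 0 ≤ η := (abs_nonneg _).trans (hη z₀)
  set m := exp (-K)
  have hm : 0 < m := exp_pos _
  have hm_le_sqrt : m ≤ √m := Real.le_sqrt_self_iff.2 (exp_le_one_iff.2 (by linarith))
  have hexp₁ z := exp_neg_mem_Icc (h₁ z)
  have hexp₂ z := exp_neg_mem_Icc (h₂ z)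
  obtain ⟨hZ₁m, hZ₁⟩ := integral_exp_neg_mem_Icc ρ hΦ₁ h₁
  obtain ⟨hZ₂m, hZ₂⟩ := integral_exp_neg_mem_Icc ρ hΦ₂ h₂
  have hexp_sub z : |exp (-Φ₁ z) - exp (-Φ₂ z)| ≤ η :=
    (abs_exp_neg_sub_exp_neg_le (h₁ z).1 (h₂ z).1).trans (hη z)
  have hZ_sub := abs_integral_sub_integral_le ρ (integrable_exp_neg ρ hΦ₁ fun z => (h₁ z).1)
    (integrable_exp_neg ρ hΦ₂ fun z => (h₂ z).1) hexp_sub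
  have hdens_ge (Φ : U → ℝ) (hexp : ∀ z, exp (-Φ z) ∈ Set.Icc m 1)
      (hZm : m ≤ ∫ z, exp (-Φ z) ∂ρ) (hZ : ∫ z, exp (-Φ z) ∂ρ ≤ 1) (z : U) :
      m ≤ gibbsDensity ρ Φ z :=
    (hexp z).1.trans (le_div_self (exp_pos _).le (hm.trans_le hZm) hZ)
  have hdens_sub z : |gibbsDensity ρ Φ₁ z - gibbsDensity ρ Φ₂ z| ≤ 2 * η / m ^ 2 := by
    refine (abs_div_sub_div_le hm hZ₁m hZ₂m ?_ hZ₂).trans ?_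
    · rw [abs_of_pos (exp_pos _)]; exact (hexp₂ z).2
    · gcongr; linarith [hexp_sub z]
  refine hellingerDist_le_of_abs_sqrt_sub_le ρ (by positivity) fun z => ?_
  calc _ ≤ |gibbsDensity ρ Φ₁ z - gibbsDensity ρ Φ₂ z| / (2 * √m) :=
        abs_sqrt_sub_sqrt_le hm (hdens_ge Φ₁ hexp₁ hZ₁m hZ₁ z) (hdens_ge Φ₂ hexp₂ hZ₂m hZ₂ z)
    _ ≤ 2 * η / m ^ 2 / (2 * m) := by gcongr; exact hdens_sub z
    _ = exp (3 * K) * η := by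
        have hm3 : exp (3 * K) * m ^ 3 = 1 := by
          rw [← exp_nat_mul, ← exp_add]
          norm_num
        field_simp
        linear_combination -η * hm3

end Integrals

theorem hellinger_rate_FE_approximation_general
    {U : Type*} [MeasurableSpace U] (ρ : Measure U) [IsProbabilityMeasure ρ]
    {N : ℕ} (S : Matrix (Fin N) (Fin N) ℝ) (hS : S.PosDef) (δ : Fin N → ℝ)
    (M C₁ C₂ : ℝ) (hM : 0 < M) (hC₁ : 0 < C₁) (hC₂ : 0 < C₂)
    (Gep : ℝ → U → Fin N → ℝ) (Gfe : ℕ → U → Fin N → ℝ) (G0 : U → Fin N → ℝ)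
    (hGepmeas : ∀ ε ∈ Set.Ioc (0 : ℝ) 1, Measurable (Gep ε))
    (hGfemeas : ∀ L, Measurable (Gfe L))
    (hGepbdd : ∀ ε ∈ Set.Ioc (0 : ℝ) 1, ∀ z, euclNorm (Gep ε z) ≤ M)
    (hGfebdd : ∀ L, ∀ z, euclNorm (Gfe L z) ≤ M)
    (hGeprate : ∀ ε ∈ Set.Ioc (0 : ℝ) 1, ∀ z,
        euclNorm (Gep ε z - G0 z) ≤ C₁ * Real.sqrt ε)
    (hGferate : ∀ (L : ℕ) (z : U),
        euclNorm (Gfe L z - G0 z) ≤ C₂ * Real.sqrt L * 2 ^ (-(L : ℤ))) :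
    ∃ c : ℝ, ∀ ε ∈ Set.Ioc (0 : ℝ) 1, ∀ L : ℕ,
      hellingerDist ρ (gibbsDensity ρ (potential S δ (Gep ε)))
          (gibbsDensity ρ (potential S δ (Gfe L)))
        ≤ c * (Real.sqrt ε + Real.sqrt L * 2 ^ (-(L : ℤ))) := by
  set K := ∑ i, ∑ j, |S⁻¹ i j|
  set R := euclNorm δ + M
  have hKR : 0 ≤ K * R := by have := euclNorm_nonneg δ; positivity
  refine ⟨exp (3 * (K * R ^ 2 / 2)) * (K * R * (C₁ + C₂)), fun ε hε L => ?_⟩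
  have hbound {G : U → Fin N → ℝ} (hG : ∀ z, euclNorm (G z) ≤ M) z :
      potential S δ G z ∈ Set.Icc 0 (K * R ^ 2 / 2) :=
    ⟨potential_nonneg S δ hS G z, potential_le S δ (hG z)⟩
  have hG_sub z : euclNorm (Gep ε z - Gfe L z)
      ≤ (C₁ + C₂) * (√ε + √L * 2 ^ (-(L : ℤ))) := by
    calc _ ≤ C₁ * √ε + C₂ * √L * 2 ^ (-(L : ℤ)) :=
          (euclNorm_sub_le_sub_add_sub _ _ (G0 z)).trans
            (add_le_add (hGeprate ε hε z) (hGferate L z))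
      _ ≤ _ := by
          nlinarith [mul_nonneg hC₁.le (by positivity : (0 : ℝ) ≤ √L * 2 ^ (-(L : ℤ))),
            mul_nonneg hC₂.le (Real.sqrt_nonneg ε)]
  calc _ ≤ exp (3 * (K * R ^ 2 / 2)) * (K * R * ((C₁ + C₂) * (√ε + √L * 2 ^ (-(L : ℤ))))) :=
        hellingerDist_gibbsDensity_le ρ (measurable_potential S δ (hGepmeas ε hε))
          (measurable_potential S δ (hGfemeas L)) (hbound (hGepbdd ε hε)) (hbound (hGfebdd L))
          fun z => (abs_potential_sub_le S δ (hGepbdd ε hε z) (hGfebdd L z)).trans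
            (mul_le_mul_of_nonneg_left (hG_sub z) hKR)
    _ = _ := by ring

/-- Hellinger rate for the finite element approximation of the posterior:
if `|G_ε − G_0| ≤ C₁ ε^{1/2}` and `|G^L − G_0| ≤ C₂ L^{1/2} 2^{−L}` with all
maps uniformly bounded, then `d_Hell(μ_ε, ν_L) ≤ c (ε^{1/2} + L^{1/2} 2^{−L})`. -/
theorem hellinger_rate_FE_approximation
    {U : Type*} [MeasurableSpace U] (ρ : Measure U) [IsProbabilityMeasure ρ]
    {N : ℕ} (S : Matrix (Fin N) (Fin N) ℝ) (hS : S.PosDef) (δ : Fin N → ℝ)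
    (M C₁ C₂ : ℝ) (hM : 0 < M) (hC₁ : 0 < C₁) (hC₂ : 0 < C₂)
    (Gep : ℝ → U → Fin N → ℝ) (Gfe : ℕ → U → Fin N → ℝ) (G0 : U → Fin N → ℝ)
    (hGepmeas : ∀ ε ∈ Set.Ioc (0 : ℝ) 1, Measurable (Gep ε))
    (hGfemeas : ∀ L, Measurable (Gfe L)) (hG0meas : Measurable G0)
    (hGepbdd : ∀ ε ∈ Set.Ioc (0 : ℝ) 1, ∀ z, euclNorm (Gep ε z) ≤ M)
    (hGfebdd : ∀ L, ∀ z, euclNorm (Gfe L z) ≤ M)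
    (hG0bdd : ∀ z, euclNorm (G0 z) ≤ M)
    (hGeprate : ∀ ε ∈ Set.Ioc (0 : ℝ) 1, ∀ z,
        euclNorm (Gep ε z - G0 z) ≤ C₁ * Real.sqrt ε)
    (hGferate : ∀ (L : ℕ) (z : U),
        euclNorm (Gfe L z - G0 z) ≤ C₂ * Real.sqrt L * 2 ^ (-(L : ℤ))) :
    ∃ c : ℝ, ∀ ε ∈ Set.Ioc (0 : ℝ) 1, ∀ L : ℕ,
      hellingerDist ρ (gibbsDensity ρ (potential S δ (Gep ε)))
          (gibbsDensity ρ (potential S δ (Gfe L)))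
        ≤ c * (Real.sqrt ε + Real.sqrt L * 2 ^ (-(L : ℤ))) :=
  hellinger_rate_FE_approximation_general ρ S hS δ M C₁ C₂ hM hC₁ hC₂ Gep Gfe G0 hGepmeas hGfemeas
    hGepbdd hGfebdd hGeprate hGferate
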